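/- Let M be a compact Riemannian manifold with a parallel form ω, d_c the twisted differential {d, C}, and η a harmonic form on M. Then d_c(η) = 0; that is, every harmonic form is pseudo-harmonic with respect to d_c. -/
import Mathlib


/-- Let `M` be a compact Riemannian manifold with a parallel `k`-form `ω`, and
`d_c = {d, C} = {L_ω, d*}` the twisted differential. We model the forms `Λ*(M)` by a
finite-dimensional real inner product space `F` (the paper works in the finite-dimensional
eigenspaces of the Laplacian), with `d` the exterior differential (`d² = 0`),
`d* = adjoint d`, `Lω` wedging with ω, `s = (-1)^k`. Hypotheses: ω is closed
(`{L_ω, d} = 0`), the generalized Kähler identity `d_c = {L_ω, d*} = {d, C}` (valid since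
ω is parallel). If `η` is harmonic (`dη = 0` and `d*η = 0`, which on a compact manifold is
equivalent to `Δη = 0`), then `d_c η = 0`: every harmonic form is pseudo-harmonic. -/
theorem harmonic_is_pseudoharmonic
    {F : Type*} [NormedAddCommGroup F] [InnerProductSpace ℝ F] [FiniteDimensional ℝ F]
    (k : ℕ) (s : ℝ) (hsign : s = (-1 : ℝ) ^ k)
    (d C Lω d_c : F →ₗ[ℝ] F) (hd2 : d ∘ₗ d = 0)
    (hclosed : Lω ∘ₗ d - s • (d ∘ₗ Lω) = 0)
    (hdc : d_c = Lω ∘ₗ LinearMap.adjoint d - s • (LinearMap.adjoint d ∘ₗ Lω))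
    (hkahler : d_c = d ∘ₗ C - s • (C ∘ₗ d))
    (η : F) (hclosed_η : d η = 0) (hcoclosed_η : LinearMap.adjoint d η = 0) :
    d_c η = 0 := by
  have h1 : d_c η = d (C η) := by
    rw [hkahler]; simp [LinearMap.sub_apply, LinearMap.comp_apply, hclosed_η]
  have h2 : d_c η = -s • LinearMap.adjoint d (Lω η) := by
    rw [hdc]; simp [LinearMap.sub_apply, LinearMap.comp_apply, hcoclosed_η, neg_smul]
  have hdd : LinearMap.adjoint d (LinearMap.adjoint d (Lω η)) = 0 := by
    have : LinearMap.adjoint d ∘ₗ LinearMap.adjoint d = 0 := by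
      rw [← LinearMap.adjoint_comp, hd2, map_zero]
    simpa using congrArg (fun f => f (Lω η)) this
  have hnorm : inner (𝕜:=ℝ) (d_c η) (d_c η) = 0 := by
    calc inner (𝕜:=ℝ) (d_c η) (d_c η) = inner (𝕜:=ℝ) (d (C η)) (d_c η) := by rw [← h1]
    _ = inner (𝕜:=ℝ) (C η) (LinearMap.adjoint d (d_c η)) := by
        rw [LinearMap.adjoint_inner_right]
    _ = 0 := by
        rw [h2]; simp [hdd]
  exact inner_self_eq_zero.mp hnorm
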